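/- Let Y_1, ..., Y_s be i.i.d. random variables where each Y_i is obtained by first sampling W from the truncated Poisson distribution P(W = w) = z^w/(w! f_{k+1}(z)) on {k+1, k+2, ...} and then sampling Y_i ~ Binomial(W, p). Then for every nonnegative integer D, P(Y_1 + ⋯ + Y_s = D) ≤ e^{(1−p)zs} (pzs)^D / (f_{k+1}(z)^s D!). -/

import Mathlib

/-- `ftail ℓ z = ∑_{j ≥ ℓ} z^j / j!`, the tail of the exponential series. -/
noncomputable def ftail (ℓ : ℕ) (z : ℝ) : ℝ := ∑' j : ℕ, z ^ (j + ℓ) / (Nat.factorial (j + ℓ))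

/-- The truncated Poisson mass function on `{k+1, k+2, …}`. -/
noncomputable def truncPoisson (k : ℕ) (z : ℝ) (j : ℕ) : ℝ :=
  if k + 1 ≤ j then z ^ j / (Nat.factorial j * ftail (k + 1) z) else 0

/-- The mass function of `Y`, where `W` is truncated Poisson and `Y | W = w ~ Bin(w, p)`. -/
noncomputable def mixedBin (k : ℕ) (z p : ℝ) (d : ℕ) : ℝ :=
  ∑' w : ℕ, truncPoisson k z w * (w.choose d * p ^ d * (1 - p) ^ (w - d))

/-! Poisson thinning: `z^w/w! · C(w,d) p^d (1-p)^(w-d) = (pz)^d/d! · ((1-p)z)^(w-d)/(w-d)!`, so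
summing over all `w ≥ d` (which only adds nonnegative terms to the truncated sum over `w ≥ k+1`)
gives `P(Y = d) ≤ e^{(1-p)z}/f_{k+1}(z) · (pz)^d/d!`. Multiplying these bounds over the `s`
coordinates and summing over the compositions of `D`, the multinomial theorem collapses
`∑ ∏ (pz)^{d_i}/d_i!` to `(spz)^D/D!`. -/

open Finset Nat

lemma ftail_pos (ℓ : ℕ) {z : ℝ} (hz : 0 < z) : 0 < ftail ℓ z :=
  ((summable_nat_add_iff ℓ).mpr (Real.summable_pow_div_factorial z)).tsum_pos
    (fun _ => by positivity) 0 (by positivity)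

lemma truncPoisson_nonneg (k : ℕ) {z : ℝ} (hz : 0 < z) (w : ℕ) : 0 ≤ truncPoisson k z w := by
  have := ftail_pos (k + 1) hz
  unfold truncPoisson
  split_ifs <;> positivity

lemma truncPoisson_le (k : ℕ) {z : ℝ} (hz : 0 < z) (w : ℕ) :
    truncPoisson k z w ≤ z ^ w / w ! / ftail (k + 1) z := by
  have := ftail_pos (k + 1) hz
  unfold truncPoisson
  split_ifs
  · rw [div_div]
  · positivity

lemma pow_div_factorial_mul_choose (z p : ℝ) {d w : ℕ} (h : d ≤ w) :
    z ^ w / w ! * (w.choose d * p ^ d * (1 - p) ^ (w - d)) =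
      (p * z) ^ d / d ! * (((1 - p) * z) ^ (w - d) / (w - d)!) := by
  obtain ⟨m, rfl⟩ := Nat.exists_eq_add_of_le h
  rw [Nat.cast_choose ℝ h, Nat.add_sub_cancel_left, mul_pow, mul_pow, pow_add]
  field_simp

lemma hasSum_pow_div_factorial_mul_choose (z p : ℝ) (d : ℕ) :
    HasSum (fun w : ℕ => z ^ w / w ! * (w.choose d * p ^ d * (1 - p) ^ (w - d)))
      ((p * z) ^ d / d ! * Real.exp ((1 - p) * z)) := by
  rw [← hasSum_nat_add_iff' d,
    sum_eq_zero fun i hi => by simp [Nat.choose_eq_zero_of_lt (mem_range.mp hi)], sub_zero]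
  have hexp := (NormedSpace.expSeries_div_hasSum_exp ((1 - p) * z)).mul_left ((p * z) ^ d / d !)
  rw [← Real.exp_eq_exp_ℝ] at hexp
  refine hexp.congr_fun fun m => ?_
  rw [pow_div_factorial_mul_choose z p (Nat.le_add_left d m), Nat.add_sub_cancel]

lemma mixedBin_nonneg (k : ℕ) {z p : ℝ} (hz : 0 < z) (hp : 0 ≤ p) (hp1 : p ≤ 1) (d : ℕ) :
    0 ≤ mixedBin k z p d := by
  have : 0 ≤ 1 - p := by linarith
  exact tsum_nonneg fun w => mul_nonneg (truncPoisson_nonneg k hz w) (by positivity)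

lemma mixedBin_le (k : ℕ) {z p : ℝ} (hz : 0 < z) (hp : 0 ≤ p) (hp1 : p ≤ 1) (d : ℕ) :
    mixedBin k z p d ≤ Real.exp ((1 - p) * z) / ftail (k + 1) z * ((p * z) ^ d / d !) := by
  have : 0 ≤ 1 - p := by linarith
  have hthin := (hasSum_pow_div_factorial_mul_choose z p d).div_const (ftail (k + 1) z)
  have hle : ∀ w : ℕ, truncPoisson k z w * (w.choose d * p ^ d * (1 - p) ^ (w - d)) ≤
      z ^ w / w ! * (w.choose d * p ^ d * (1 - p) ^ (w - d)) / ftail (k + 1) z := fun w => by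
    rw [mul_div_right_comm]
    gcongr
    exact truncPoisson_le k hz w
  calc mixedBin k z p d
      ≤ ∑' w : ℕ, z ^ w / w ! * (w.choose d * p ^ d * (1 - p) ^ (w - d)) / ftail (k + 1) z :=
        Summable.tsum_le_tsum hle (hthin.summable.of_nonneg_of_le
          (fun w => mul_nonneg (truncPoisson_nonneg k hz w) (by positivity)) hle) hthin.summable
    _ = _ := by rw [hthin.tsum_eq]; ring

lemma sum_piAntidiag_prod_pow_div_factorial {ι R : Type*} [DecidableEq ι] [Field R] [CharZero R]
    (s : Finset ι) (x : ι → R) (n : ℕ) :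
    ∑ d ∈ piAntidiag s n, ∏ i ∈ s, x i ^ d i / (d i)! = (∑ i ∈ s, x i) ^ n / n ! := by
  rw [sum_pow_eq_sum_piAntidiag, sum_div]
  refine sum_congr rfl fun d hd => ?_
  have hfact : ((∏ i ∈ s, (d i)! : ℕ) : R) * multinomial s d = n ! := by
    rw [← (mem_piAntidiag.mp hd).1]
    exact_mod_cast multinomial_spec s d
  rw [← hfact, prod_div_distrib, Nat.cast_prod]
  have : ∏ i ∈ s, ((d i)! : R) ≠ 0 :=
    prod_ne_zero_iff.mpr fun i _ => Nat.cast_ne_zero.mpr (factorial_ne_zero _)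
  have : (multinomial s d : R) ≠ 0 := Nat.cast_ne_zero.mpr (multinomial_pos s d).ne'
  field_simp

lemma tsum_ite_sum_eq_eq_sum_piAntidiag {ι M : Type*} [Fintype ι] [DecidableEq ι]
    [AddCommMonoid M] [TopologicalSpace M] (f : (ι → ℕ) → M) (n : ℕ) :
    ∑' d : ι → ℕ, (if ∑ i, d i = n then f d else 0) = ∑ d ∈ piAntidiag univ n, f d := by
  rw [tsum_eq_sum (s := piAntidiag univ n) fun d hd => if_neg (by simpa using hd)]
  exact sum_congr rfl fun d hd => if_pos (by simpa using hd)

theorem stmt6_general (k s : ℕ) (z p : ℝ) (hz : 0 < z) (hp : 0 < p) (hp1 : p < 1)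
    (D : ℕ) :
    (∑' d : Fin s → ℕ, if ∑ i, d i = D then ∏ i, mixedBin k z p (d i) else 0) ≤
      Real.exp ((1 - p) * z * s) * (p * z * s) ^ D /
        (ftail (k + 1) z ^ s * Nat.factorial D) := by
  set c := Real.exp ((1 - p) * z) / ftail (k + 1) z
  calc _ = ∑ d ∈ piAntidiag univ D, ∏ i, mixedBin k z p (d i) :=
        tsum_ite_sum_eq_eq_sum_piAntidiag _ D
    _ ≤ ∑ d ∈ piAntidiag univ D, ∏ i, c * ((p * z) ^ d i / (d i)!) :=
        sum_le_sum fun d _ => prod_le_prod (fun i _ => mixedBin_nonneg k hz hp.le hp1.le (d i))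
          fun i _ => mixedBin_le k hz hp.le hp1.le (d i)
    _ = c ^ s * ((s * (p * z)) ^ D / D !) := by
        simp only [prod_mul_distrib, prod_const, Finset.card_fin, ← mul_sum,
          sum_piAntidiag_prod_pow_div_factorial, sum_const, nsmul_eq_mul]
        ring
    _ = _ := by
        rw [div_pow, ← Real.exp_nat_mul]
        field_simp

/-- if `Y_1,…,Y_s` are i.i.d. with the mixed truncated-Poisson/binomial law,
then `P(Y_1 + ⋯ + Y_s = D) ≤ e^{(1-p)zs} (pzs)^D / (f_{k+1}(z)^s D!)`. -/
theorem stmt6 (k s : ℕ) (hs : 0 < s) (z p : ℝ) (hz : 0 < z) (hp : 0 < p) (hp1 : p < 1)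
    (D : ℕ) :
    (∑' d : Fin s → ℕ, if ∑ i, d i = D then ∏ i, mixedBin k z p (d i) else 0) ≤
      Real.exp ((1 - p) * z * s) * (p * z * s) ^ D /
        (ftail (k + 1) z ^ s * Nat.factorial D) :=
  stmt6_general k s z p hz hp hp1 D
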